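/- Let t : ℕ → Bool be the Thue–Morse sequence. Then t belongs to the class 𝒞, and over the two-letter alphabet Bool the sequences in 𝒞 are exactly the two Thue–Morse sequences: a sequence b : ℕ → Bool belongs to 𝒞 if and only if b = t or b is the pointwise complement of t (b(n) = ¬t(n) for all n). -/

import Mathlib

/-- Membership in the class 𝒞: there exist a letter `c`, bijections `f n`,
and words `w n` with `w 0 = [c]`,
`w (n+1) = w n ++ f n (w n) ++ f n (w n) ++ w n`, `f n (w n) ≠ w n`,
and `w n` is the prefix of `a` of length `4 ^ n`. -/
def InC {α : Type*} (a : ℕ → α) : Prop :=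
  ∃ (c : α) (f : ℕ → α ≃ α) (w : ℕ → List α),
    w 0 = [c] ∧
    (∀ n, w (n + 1) = w n ++ (w n).map (f n) ++ (w n).map (f n) ++ w n) ∧
    (∀ n, (w n).map (f n) ≠ w n) ∧
    (∀ n, w n = (List.range (4 ^ n)).map a)

/-- The factor `a(x) a(x+1) ⋯ a(x+y-1)` of the sequence `a`. -/
def factor {α : Type*} (a : ℕ → α) (x y : ℕ) : List α :=
  (List.range y).map (fun i => a (x + i))

/-- The prefix of `a` of length `n`. -/
def prefixWord {α : Type*} (a : ℕ → α) (n : ℕ) : List α :=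
  factor a 0 n

/-- The palindromic length of a finite word: the least number of palindromes
whose concatenation is the word (0 for the empty word). -/
noncomputable def palLen {α : Type*} (w : List α) : ℕ :=
  sInf {k | ∃ ps : List (List α),
    ps.length = k ∧ (∀ p ∈ ps, p.Palindrome) ∧ ps.flatten = w}

/-- `P a n` is the palindromic length of the prefix of `a` of length `n`. -/
noncomputable def P {α : Type*} (a : ℕ → α) (n : ℕ) : ℕ :=
  palLen (prefixWord a n)

/-- The factor of length `y` at position `x` is embedded into the center of the
factor of length `4 * r` at position `4 * z`. -/
def EmbedCenter (x y z r : ℕ) : Prop :=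
  4 * z ≤ x ∧ x + y ≤ 4 * z + 4 * r ∧ x - 4 * z = (4 * z + 4 * r) - (x + y)

/-- The Thue–Morse sequence: `true` iff the number of ones in the binary
expansion is odd. -/
def thueMorse (n : ℕ) : Bool :=
  (Nat.digits 2 n).count 1 % 2 == 1

/-!
Since `t (2 ^ k * j + i) = t j xor t i` for `i < 2 ^ k`, the prefix of length `4 ^ (n + 1)` of
`t`, or of its complement, is `w ++ ¬w ++ ¬w ++ w` where `w` is the prefix of length `4 ^ n`;
so both lie in `𝒞` with every `f n` the negation. Conversely, negation is the only permutation
of `Bool` that moves some letter, so `f n (w n) ≠ w n` forces the recursion of any `b ∈ 𝒞` to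
be this one, and its prefixes of length `4 ^ n` coincide with those of `fun k => b 0 xor t k`.
-/

theorem factor_add {α : Type*} (a : ℕ → α) (x y z : ℕ) :
    factor a x (y + z) = factor a x y ++ factor a (x + y) z := by
  simp [factor, List.range_add, Function.comp_def, add_assoc]

theorem map_range_eq_factor {α : Type*} (a : ℕ → α) (n : ℕ) :
    (List.range n).map a = factor a 0 n := by
  simp [factor]

theorem factor_eq_map_factor_zero {α : Type*} {a : ℕ → α} {g : α → α} {x y : ℕ}
    (h : ∀ i < y, a (x + i) = g (a i)) : factor a x y = (factor a 0 y).map g := by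
  simp only [factor, List.map_map, zero_add]
  exact List.map_congr_left fun i hi => h i (List.mem_range.mp hi)

theorem eq_of_factor_four_pow_eq {α : Type*} {a b : ℕ → α}
    (h : ∀ n, factor a 0 (4 ^ n) = factor b 0 (4 ^ n)) : a = b := by
  funext k
  simpa [factor] using
    List.map_inj_left.mp (h k) k (List.mem_range.mpr (Nat.lt_pow_self (by norm_num)))

theorem factor_four_mul {α : Type*} (a : ℕ → α) (g : α → α) (m : ℕ)
    (h₁ : ∀ i < m, a (m + i) = g (a i)) (h₂ : ∀ i < m, a (2 * m + i) = g (a i))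
    (h₃ : ∀ i < m, a (3 * m + i) = a i) :
    factor a 0 (4 * m) =
      factor a 0 m ++ (factor a 0 m).map g ++ (factor a 0 m).map g ++ factor a 0 m := by
  rw [two_mul] at h₂
  rw [show 3 * m = m + m + m by ring] at h₃
  rw [show 4 * m = m + m + m + m by ring, factor_add, factor_add, factor_add]
  simp only [zero_add]
  rw [factor_eq_map_factor_zero h₁, factor_eq_map_factor_zero h₂,
    factor_eq_map_factor_zero (g := id) h₃, List.map_id]

theorem List.map_not_ne_self {l : List Bool} (hl : l ≠ []) : l.map not ≠ l := by
  obtain ⟨x, l, rfl⟩ := List.exists_cons_of_ne_nil hl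
  simp

theorem Equiv.Perm.coe_eq_not_of_map_ne {l : List Bool} {e : Equiv.Perm Bool}
    (h : l.map e ≠ l) : ⇑e = not := by
  obtain ⟨x, -, hx⟩ : ∃ x ∈ l, e x ≠ x := by
    by_contra! hfix
    exact h ((List.map_congr_left hfix).trans l.map_id)
  funext y
  by_cases hy : y = x
  · exact hy ▸ Bool.eq_not_of_ne hx
  · rw [Bool.eq_not_of_ne (e.injective.ne hy), Bool.eq_not_of_ne hx, Bool.eq_not_of_ne hy]

theorem thueMorse_zero : thueMorse 0 = false := rfl

theorem thueMorse_two_mul (n : ℕ) : thueMorse (2 * n) = thueMorse n := by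
  rcases Nat.eq_zero_or_pos n with rfl | hn
  · rfl
  · rw [thueMorse, Nat.digits_def' (by norm_num) (by omega)]
    simp [thueMorse]

theorem thueMorse_two_mul_add_one (n : ℕ) : thueMorse (2 * n + 1) = !thueMorse n := by
  rw [thueMorse, Nat.digits_def' (by norm_num) (by omega),
    show (2 * n + 1) % 2 = 1 by omega, show (2 * n + 1) / 2 = n by omega, List.count_cons]
  rcases Nat.mod_two_eq_zero_or_one ((Nat.digits 2 n).count 1) with h | h <;>
    simp [thueMorse, Nat.add_mod, h]

theorem thueMorse_two_pow_mul_add {k : ℕ} (j : ℕ) {i : ℕ} (hi : i < 2 ^ k) :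
    thueMorse (2 ^ k * j + i) = xor (thueMorse j) (thueMorse i) := by
  induction k generalizing i with
  | zero => simp [Nat.lt_one_iff.mp hi, thueMorse_zero]
  | succ k ih =>
    obtain ⟨i, rfl | rfl⟩ := Nat.even_or_odd' i
    · rw [show 2 ^ (k + 1) * j + 2 * i = 2 * (2 ^ k * j + i) by ring, thueMorse_two_mul,
        ih (by omega), thueMorse_two_mul]
    · rw [show 2 ^ (k + 1) * j + (2 * i + 1) = 2 * (2 ^ k * j + i) + 1 by ring,
        thueMorse_two_mul_add_one, ih (by omega), thueMorse_two_mul_add_one, Bool.xor_not]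

theorem thueMorse_four_pow_mul_add {n : ℕ} (j : ℕ) {i : ℕ} (hi : i < 4 ^ n) :
    thueMorse (4 ^ n * j + i) = xor (thueMorse j) (thueMorse i) := by
  rw [show 4 ^ n = 2 ^ (2 * n) by rw [pow_mul]; norm_num] at hi ⊢
  exact thueMorse_two_pow_mul_add j hi

theorem factor_xor_thueMorse_four_mul (c : Bool) (n : ℕ) :
    let w := factor (fun k => xor c (thueMorse k)) 0 (4 ^ n)
    factor (fun k => xor c (thueMorse k)) 0 (4 * 4 ^ n) = w ++ w.map not ++ w.map not ++ w := by
  have block (j : ℕ) {i : ℕ} (hi : i < 4 ^ n) :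
      xor c (thueMorse (j * 4 ^ n + i)) = xor (thueMorse j) (xor c (thueMorse i)) := by
    rw [mul_comm, thueMorse_four_pow_mul_add j hi, Bool.xor_left_comm]
  apply factor_four_mul
  · intro i hi; simpa [show thueMorse 1 = true by decide] using block 1 hi
  · intro i hi; simpa [show thueMorse 2 = true by decide] using block 2 hi
  · intro i hi; simpa [show thueMorse 3 = false by decide] using block 3 hi

theorem inC_xor_thueMorse (c : Bool) : InC fun k => xor c (thueMorse k) := by
  refine ⟨c, fun _ => Equiv.boolNot, fun n => (List.range (4 ^ n)).map fun k => xor c (thueMorse k),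
    by simp [thueMorse_zero], fun n => ?_, fun n => ?_, fun n => rfl⟩
  · simp only [map_range_eq_factor, pow_succ']
    exact factor_xor_thueMorse_four_mul c n
  · exact List.map_not_ne_self (by simp)

theorem eq_xor_thueMorse_of_inC {b : ℕ → Bool} (hb : InC b) :
    b = fun k => xor (b 0) (thueMorse k) := by
  obtain ⟨-, f, w, -, hrec, hne, hw⟩ := hb
  simp only [map_range_eq_factor] at hw
  have hf (n : ℕ) : ⇑(f n) = not := Equiv.Perm.coe_eq_not_of_map_ne (hne n)
  refine eq_of_factor_four_pow_eq fun n => ?_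
  induction n with
  | zero => simp [factor, thueMorse_zero]
  | succ n ih =>
    rw [← hw, hrec, hf, hw, ih, pow_succ', factor_xor_thueMorse_four_mul]

theorem stmt18 :
    InC thueMorse ∧
    (∀ b : ℕ → Bool, InC b ↔ (b = thueMorse ∨ ∀ n, b n = !thueMorse n)) := by
  have inC_thueMorse : InC thueMorse := by simpa using inC_xor_thueMorse false
  refine ⟨inC_thueMorse, fun b => ⟨fun hb => ?_, ?_⟩⟩
  · have hb0 := eq_xor_thueMorse_of_inC hb
    generalize b 0 = c at hb0
    subst hb0
    cases c <;> simp
  · rintro (rfl | hb)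
    · exact inC_thueMorse
    · simpa [← funext hb] using inC_xor_thueMorse true
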